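/- arXiv:2404.01545 — 7 statements merged into one kernel-verified Lean document; each statement's English description precedes it below -/
import Mathlib

section
/- Let τ be a finite rooted tree with root r, let k ≥ 1 and j ∈ {0,1,…,k−1}. Define C_k^j(τ) as the set of vertices v of τ whose depth is congruent to j modulo k and whose full subtree τ_v has height at least k. Then every vertex of τ lies within distance 2k of some vertex in C_k^j(τ) ∪ {r}; i.e., V(τ) = ⋃_{v ∈ C_k^j(τ) ∪ {r}} B_{2k}(v). -/
open SimpleGraph
open scoped Classical

/-- Burning number: least `k` such that there are fire sources `v₀,…,v_{k-1}` with
`⋃_{r=0}^{k-1} B_r(v_r) = V`. -/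
noncomputable def burningNumber (V : Type*) [Fintype V] (G : SimpleGraph V) : ℕ :=
  sInf {k | ∃ v : Fin k → V, ∀ u : V, ∃ r : Fin k, G.dist (v r) u ≤ (r : ℕ)}

/-- Covering number `b̂`: least `k` such that `k` balls of radius `k` cover `V`. -/
noncomputable def coverNumber (V : Type*) [Fintype V] (G : SimpleGraph V) : ℕ :=
  sInf {k | ∃ v : Fin k → V, ∀ u : V, ∃ i : Fin k, G.dist (v i) u ≤ k}

/-- Height of the full subtree of the tree `G` (rooted at `r`) rooted at `v`:
the maximal distance from `v` to a vertex `u` lying below `v` (i.e. with `v` on the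
root-to-`u` geodesic). -/
noncomputable def subHeight {V : Type*} [Fintype V] (G : SimpleGraph V) (r v : V) : ℕ :=
  Finset.sup (Finset.univ.filter (fun u => G.dist r u = G.dist r v + G.dist v u)) (G.dist v)

/-- `C_k^j(τ)`: vertices whose depth is `j` modulo `k` and whose subtree has height `≥ k`. -/
noncomputable def Cset {V : Type*} [Fintype V] (G : SimpleGraph V) (r : V) (k j : ℕ) : Finset V :=
  Finset.univ.filter (fun v => G.dist r v % k = j ∧ k ≤ subHeight G r v)

/-- A walk can be split at any index `m ≤ length` into two walks of lengths `m`
and `length - m`. -/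
lemma walk_split {V : Type*} {G : SimpleGraph V} :
    ∀ {a b : V} (p : G.Walk a b) (m : ℕ), m ≤ p.length →
      ∃ (w : V) (q : G.Walk a w) (s : G.Walk w b),
        q.length = m ∧ s.length = p.length - m := by
  intro a b p
  induction p with
  | nil =>
      intro m hm
      simp only [SimpleGraph.Walk.length_nil, Nat.le_zero] at hm
      subst hm
      exact ⟨_, .nil, .nil, rfl, rfl⟩
  | @cons u v w h t ih =>
      intro m hm
      cases m with
      | zero => exact ⟨_, .nil, .cons h t, rfl, rfl⟩
      | succ m =>
          obtain ⟨x, q, s, hq, hs⟩ := ih m (by simpa using hm)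
          exact ⟨x, .cons h q, s, by simp [hq], by simpa using hs⟩

theorem covering_lemma {V : Type*} [Fintype V] (G : SimpleGraph V) (hG : G.IsTree) (r : V)
    (k j : ℕ) (hk : 1 ≤ k) (hj : j < k) :
    ∀ u : V, ∃ v : V, (v ∈ Cset G r k j ∨ v = r) ∧ G.dist v u ≤ 2 * k := by
  intro u
  have hconn : G.Connected := hG.isConnected
  set d : ℕ := G.dist r u with hd
  by_cases hsmall : d < k + j
  · exact ⟨r, Or.inr rfl, by omega⟩
  · push_neg at hsmall
    -- choose the ancestor depth m
    set a : ℕ := d - k - j with ha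
    set t : ℕ := a / k with ht
    set rem : ℕ := a % k with hrem
    have hdm : k * t + rem = a := Nat.div_add_mod a k
    have hmod : rem < k := Nat.mod_lt _ (by omega)
    have hkt : k * t = a - rem := by omega
    set m : ℕ := j + k * t with hmdef
    have hmle : m ≤ d - k := by omega
    have hmlt : d - m < 2 * k := by omega
    have hmge : k ≤ d - m := by omega
    -- split a geodesic from r to u at index m
    obtain ⟨p, hp⟩ := hconn.exists_walk_length_eq_dist r u
    obtain ⟨w, q, s, hq, hs⟩ := walk_split p m (by omega)
    have h1 : G.dist r w ≤ m := hq ▸ SimpleGraph.dist_le q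
    have h2 : G.dist w u ≤ d - m := by
      have := SimpleGraph.dist_le s
      omega
    have htri : d ≤ G.dist r w + G.dist w u := hd ▸ hconn.dist_triangle
    have h1' : G.dist r w = m := by omega
    have h2' : G.dist w u = d - m := by omega
    have hsum : G.dist r u = G.dist r w + G.dist w u := by omega
    refine ⟨w, Or.inl ?_, by omega⟩
    rw [Cset, Finset.mem_filter]
    refine ⟨Finset.mem_univ _, ?_, ?_⟩
    · rw [h1', hmdef, Nat.add_mul_mod_self_left]
      exact Nat.mod_eq_of_lt hj
    · calc k ≤ G.dist w u := by omega
        _ ≤ subHeight G r w :=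
          Finset.le_sup (by simp [hsum])
end

section
/- Let τ be a finite rooted tree on n vertices and k ≥ 1. If for some j ∈ {0,…,k−1} the set C_k^j(τ) of vertices at depth ≡ j (mod k) whose subtree has height ≥ k satisfies |C_k^j(τ)| ≤ 2k − 1, then the vertices of τ can be covered by at most 2k balls of radius 2k, and hence the burning number of τ satisfies b(τ) ≤ 4k. -/
open SimpleGraph
open scoped Classical

private lemma walk_mid {V : Type*} {G : SimpleGraph V} {r u : V} (p : G.Walk r u) :
    ∀ t : ℕ, t ≤ p.length →
      ∃ v : V, G.Reachable r v ∧ G.dist r v ≤ t ∧ G.dist v u ≤ p.length - t := by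
  induction p with
  | nil =>
    intro t ht
    exact ⟨_, Reachable.refl _, by simp [SimpleGraph.dist_self], by simp [SimpleGraph.dist_self]⟩
  | @cons a b c h q ih =>
    intro t ht
    cases t with
    | zero =>
      refine ⟨a, Reachable.refl _, by simp [SimpleGraph.dist_self], ?_⟩
      simpa using SimpleGraph.dist_le (Walk.cons h q)
    | succ t' =>
      obtain ⟨v, hvr, hv1, hv2⟩ := ih t' (by
        simpa [Nat.succ_le_succ_iff] using ht)
      refine ⟨v, Reachable.trans ⟨Walk.cons h Walk.nil⟩ hvr, ?_, ?_⟩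
      · obtain ⟨p2, hp2⟩ := hvr.exists_walk_length_eq_dist
        calc G.dist a v ≤ ((Walk.cons h Walk.nil).append p2).length := SimpleGraph.dist_le _
          _ = 1 + G.dist b v := by simp [hp2]; omega
          _ ≤ t' + 1 := by omega
      · have : (Walk.cons h q).length - (t' + 1) = q.length - t' := by
          simp [Walk.length_cons]
        rw [this]; exact hv2

private lemma exists_mid {V : Type*} {G : SimpleGraph V} (hconn : G.Connected)
    (r u : V) (t : ℕ) (ht : t ≤ G.dist r u) :
    ∃ v : V, G.dist r v = t ∧ G.dist v u = G.dist r u - t ∧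
      G.dist r u = G.dist r v + G.dist v u := by
  obtain ⟨p, hp⟩ := hconn.exists_walk_length_eq_dist r u
  obtain ⟨v, _, hv1, hv2⟩ := walk_mid p t (by omega)
  rw [hp] at hv2
  have htri : G.dist r u ≤ G.dist r v + G.dist v u := hconn.dist_triangle
  have h1 : G.dist r v = t := by omega
  have h2 : G.dist v u = G.dist r u - t := by omega
  exact ⟨v, h1, h2, by omega⟩

theorem small_Cset_implies_burning_bound {V : Type*} [Fintype V] (G : SimpleGraph V)
    (hG : G.IsTree) (r : V) (k j : ℕ) (hk : 1 ≤ k) (hj : j < k)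
    (hC : (Cset G r k j).card ≤ 2 * k - 1) :
    (∃ s : Finset V, s.card ≤ 2 * k ∧ ∀ u : V, ∃ v ∈ s, G.dist v u ≤ 2 * k) ∧
      burningNumber V G ≤ 4 * k := by
  have hconn : G.Connected := hG.1
  set s : Finset V := insert r (Cset G r k j) with hs
  have hcard : s.card ≤ 2 * k := by
    calc s.card ≤ (Cset G r k j).card + 1 := Finset.card_insert_le _ _
      _ ≤ 2 * k - 1 + 1 := by omega
      _ ≤ 2 * k := by omega
  have hcover : ∀ u : V, ∃ v ∈ s, G.dist v u ≤ 2 * k := by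
    intro u
    set d := G.dist r u with hd
    by_cases hdk : d < k + j
    · exact ⟨r, Finset.mem_insert_self _ _, by omega⟩
    · push_neg at hdk
      set t := j + k * ((d - k - j) / k) with htdef
      have hmod : (d - k - j) % k + k * ((d - k - j) / k) = d - k - j := Nat.mod_add_div _ _
      have hmlt : (d - k - j) % k < k := Nat.mod_lt _ (by omega)
      have htle : t ≤ d - k := by omega
      obtain ⟨v, hv1, hv2, hv3⟩ := exists_mid hconn r u t (by omega)
      have hvmod : G.dist r v % k = j := by
        rw [hv1, htdef, Nat.add_mul_mod_self_left, Nat.mod_eq_of_lt hj]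
      have hsub : k ≤ subHeight G r v := by
        have hmem : u ∈ Finset.univ.filter (fun w => G.dist r w = G.dist r v + G.dist v w) := by
          simp only [Finset.mem_filter, Finset.mem_univ, true_and]
          rw [← hd]; exact hv3
        calc k ≤ G.dist v u := by omega
          _ ≤ subHeight G r v := Finset.le_sup hmem
      refine ⟨v, Finset.mem_insert_of_mem ?_, by omega⟩
      simp only [Cset, Finset.mem_filter, Finset.mem_univ, true_and]
      exact ⟨hvmod, hsub⟩
  refine ⟨⟨s, hcard, hcover⟩, ?_⟩
  apply Nat.sInf_le
  let e : s ≃ Fin s.card := s.equivFin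
  refine ⟨fun i => if h : (i : ℕ) - 2 * k < s.card then (e.symm ⟨(i : ℕ) - 2 * k, h⟩ : V) else r,
    ?_⟩
  intro u
  obtain ⟨v, hvs, hvd⟩ := hcover u
  set i : Fin s.card := e ⟨v, hvs⟩ with hi
  refine ⟨⟨(i : ℕ) + 2 * k, by omega⟩, ?_⟩
  have h1 : ((i : ℕ) + 2 * k) - 2 * k < s.card := by
    have := i.isLt; omega
  simp only [h1, dif_pos]
  have h2 : (⟨(i : ℕ) + 2 * k - 2 * k, h1⟩ : Fin s.card) = i := by
    apply Fin.ext; simp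
  rw [h2, hi, Equiv.symm_apply_apply]
  calc G.dist v u ≤ 2 * k := hvd
    _ ≤ (i : ℕ) + 2 * k := by omega
end

section
/- Let τ be a tree on n vertices such that the number Q_{2k}(τ) of unordered pairs of vertices at distance at most 2k satisfies Q_{2k}(τ) < n²/(2k) − n/2. Then the vertex set of τ cannot be partitioned into k sets each of diameter at most 2k; in particular the covering number b̂(τ) and hence the burning number b(τ) satisfy b(τ) ≥ b̂(τ) ≥ k + 1. -/
open SimpleGraph
open scoped Classical

/-!
Sorting the vertices by the part containing them, Cauchy–Schwarz gives
`n² ≤ k · #{(u, v) : u and v lie in a common part}`. If every part has diameter at most `2k`,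
those ordered pairs are the `n` diagonal ones plus at most `2 Q_{2k}` pairs at distance `≤ 2k`,
so `n² ≤ k (2 Q_{2k} + n)`, which the hypothesis forbids. A covering by `m ≤ k` balls of
radius `m` gives such parts, and a burning sequence of length `m` is such a covering.
-/

open Finset Fintype

section FiberPairs

variable {α ι : Type*} [Fintype α] [Fintype ι]

theorem card_filter_fiber_eq_eq_sum_sq (f : α → ι) :
    #{p : α × α | f p.1 = f p.2} = ∑ j, #{a | f a = j} ^ 2 := by
  rw [card_eq_sum_card_fiberwise (f := fun p : α × α => f p.1) (t := univ)
    (fun _ _ => mem_coe.2 (mem_univ _))]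
  refine sum_congr rfl fun j _ => ?_
  rw [sq, ← card_product]
  congr 1
  ext ⟨a, b⟩
  simp only [mem_filter, mem_univ, true_and, mem_product]
  constructor
  · rintro ⟨hab, rfl⟩
    exact ⟨rfl, hab.symm⟩
  · rintro ⟨rfl, hb⟩
    exact ⟨hb.symm, rfl⟩

theorem sq_card_le_card_mul_card_filter_fiber_eq (f : α → ι) :
    card α ^ 2 ≤ card ι * #{p : α × α | f p.1 = f p.2} := by
  rw [card_filter_fiber_eq_eq_sum_sq, ← card_univ (α := α),
    card_eq_sum_card_fiberwise (f := f) (t := univ) (fun _ _ => mem_coe.2 (mem_univ _))]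
  exact sq_sum_le_card_mul_sum_sq

theorem sq_card_le_card_mul_of_cover (R : α → α → Prop) [DecidableRel R] (U : ι → Finset α)
    (hcov : ∀ a, ∃ i, a ∈ U i) (hR : ∀ i, ∀ a ∈ U i, ∀ b ∈ U i, R a b) :
    card α ^ 2 ≤ card ι * (#(univ.offDiag.filter fun p : α × α => R p.1 p.2) + card α) := by
  choose f hf using hcov
  have hsub : ({p : α × α | f p.1 = f p.2} : Finset _) ⊆
      univ.offDiag.filter (fun p : α × α => R p.1 p.2) ∪ univ.diag := by
    rintro ⟨a, b⟩ hab
    simp only [mem_filter, mem_univ, true_and] at hab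
    by_cases h : a = b
    · simp [h]
    · exact mem_union_left _ (mem_filter.2 ⟨by simpa using h, hR _ a (hab ▸ hf a) b (hf b)⟩)
  calc card α ^ 2 ≤ card ι * #{p : α × α | f p.1 = f p.2} :=
        sq_card_le_card_mul_card_filter_fiber_eq f
    _ ≤ _ := by
        gcongr
        exact (card_le_card hsub).trans ((card_union_le _ _).trans (by simp))

end FiberPairs

theorem mul_add_lt_sq_of_half_lt {Q n k : ℕ}
    (h : (Q : ℝ) / 2 < (n : ℝ) ^ 2 / (2 * k) - n / 2) : k * (Q + n) < n ^ 2 := by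
  -- for `k = 0` the right-hand side is `-n/2`, since `x / 0 = 0`
  rcases Nat.eq_zero_or_pos k with rfl | hk
  · simp only [CharP.cast_eq_zero, mul_zero, div_zero, zero_sub] at h
    linarith [(by positivity : (0 : ℝ) ≤ Q / 2 + n / 2)]
  · have hk' : (0 : ℝ) < 2 * k := by positivity
    rw [lt_sub_iff_add_lt, ← add_div, div_lt_div_iff₀ two_pos hk'] at h
    exact_mod_cast (by linarith : (k : ℝ) * (Q + n) < n ^ 2)

theorem exists_ball_cover_of_burning_seq {V : Type*} (G : SimpleGraph V) {m : ℕ} {v : Fin m → V}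
    (hv : ∀ u, ∃ r : Fin m, G.dist (v r) u ≤ r) : ∀ u, ∃ i : Fin m, G.dist (v i) u ≤ m :=
  fun u => (hv u).imp fun r hr => hr.trans r.2.le

section Burning

variable {V : Type*} [Fintype V] (G : SimpleGraph V)

theorem exists_burning_seq_card :
    ∃ v : Fin (card V) → V, ∀ u, ∃ r : Fin (card V), G.dist (v r) u ≤ r :=
  ⟨(equivFin V).symm, fun u => ⟨equivFin V u, by simp⟩⟩

theorem coverNumber_le_burningNumber : coverNumber V G ≤ burningNumber V G := by
  obtain ⟨v, hv⟩ := Nat.sInf_mem (⟨_, exists_burning_seq_card G⟩ :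
    {m | ∃ v : Fin m → V, ∀ u, ∃ r : Fin m, G.dist (v r) u ≤ r}.Nonempty)
  exact Nat.sInf_le ⟨v, exists_ball_cover_of_burning_seq G hv⟩

theorem exists_ball_cover_coverNumber :
    ∃ v : Fin (coverNumber V G) → V, ∀ u, ∃ i, G.dist (v i) u ≤ coverNumber V G := by
  obtain ⟨v, hv⟩ := exists_burning_seq_card G
  exact Nat.sInf_mem (⟨_, v, exists_ball_cover_of_burning_seq G hv⟩ :
    {m | ∃ v : Fin m → V, ∀ u, ∃ i : Fin m, G.dist (v i) u ≤ m}.Nonempty)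

theorem exists_cover_dist_le_two_mul_of_ball_cover (hG : G.Connected) {ι : Type*} (v : ι → V)
    (r : ℕ) (hv : ∀ u, ∃ i, G.dist (v i) u ≤ r) :
    ∃ U : ι → Finset V, (∀ u, ∃ i, u ∈ U i) ∧ ∀ i, ∀ a ∈ U i, ∀ b ∈ U i, G.dist a b ≤ 2 * r := by
  refine ⟨fun i => {u | G.dist (v i) u ≤ r}, fun u => by simpa using hv u, fun i a ha b hb => ?_⟩
  simp only [mem_filter, mem_univ, true_and] at ha hb
  calc G.dist a b ≤ G.dist a (v i) + G.dist (v i) b := hG.dist_triangle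
    _ ≤ 2 * r := by rw [dist_comm]; omega

theorem not_exists_cover_dist_le_of_pair_count_lt {k : ℕ}
    (hQ : ((univ.offDiag.filter (fun p : V × V => G.dist p.1 p.2 ≤ 2 * k)).card : ℝ) / 2
      < (card V : ℝ) ^ 2 / (2 * k) - card V / 2)
    {ι : Type*} [Fintype ι] (hι : card ι ≤ k) :
    ¬ ∃ U : ι → Finset V, (∀ u, ∃ i, u ∈ U i) ∧
      ∀ i, ∀ a ∈ U i, ∀ b ∈ U i, G.dist a b ≤ 2 * k := by
  rintro ⟨U, hcov, hU⟩
  refine lt_irrefl (card V ^ 2) ?_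
  calc card V ^ 2 ≤ card ι * (_ + card V) := sq_card_le_card_mul_of_cover _ U hcov hU
    _ ≤ k * (_ + card V) := Nat.mul_le_mul_right _ hι
    _ < card V ^ 2 := mul_add_lt_sq_of_half_lt hQ

end Burning

theorem pair_count_lower_bound_burning_general {V : Type*} [Fintype V] (G : SimpleGraph V)
    (hG : G.IsTree) (n k : ℕ) (hn : Fintype.card V = n)
    (hQ : ((Finset.univ.offDiag.filter
        (fun p : V × V => G.dist p.1 p.2 ≤ 2 * k)).card : ℝ) / 2
        < (n : ℝ) ^ 2 / (2 * k) - n / 2) :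
    (¬ ∃ U : Fin k → Finset V, (∀ v : V, ∃ j, v ∈ U j) ∧
        ∀ j, ∀ u ∈ U j, ∀ v ∈ U j, G.dist u v ≤ 2 * k) ∧
      k + 1 ≤ coverNumber V G ∧ coverNumber V G ≤ burningNumber V G := by
  subst hn
  refine ⟨not_exists_cover_dist_le_of_pair_count_lt G hQ (by simp), ?_,
    coverNumber_le_burningNumber G⟩
  by_contra! hcover
  obtain ⟨v, hv⟩ := exists_ball_cover_coverNumber G
  exact not_exists_cover_dist_le_of_pair_count_lt G hQ (ι := Fin (coverNumber V G))
    (by simp; omega) <| exists_cover_dist_le_two_mul_of_ball_cover G hG.connected v k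
      fun u => (hv u).imp fun i hi => hi.trans (by omega)

theorem pair_count_lower_bound_burning {V : Type*} [Fintype V] (G : SimpleGraph V)
    (hG : G.IsTree) (n k : ℕ) (hn : Fintype.card V = n) (hk : 1 ≤ k)
    (hQ : ((Finset.univ.offDiag.filter
        (fun p : V × V => G.dist p.1 p.2 ≤ 2 * k)).card : ℝ) / 2
        < (n : ℝ) ^ 2 / (2 * k) - n / 2) :
    (¬ ∃ U : Fin k → Finset V, (∀ v : V, ∃ j, v ∈ U j) ∧
        ∀ j, ∀ u ∈ U j, ∀ v ∈ U j, G.dist u v ≤ 2 * k) ∧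
      k + 1 ≤ coverNumber V G ∧ coverNumber V G ≤ burningNumber V G :=
  pair_count_lower_bound_burning_general G hG n k hn hQ
end

section
/- If (d₁, d₂, …, d_s) is a sequence of nonnegative integers with Σ_{i=1}^{s} d_i = s − 1, then exactly one of its s cyclic permutations is the preorder degree sequence of a rooted ordered tree on s vertices (the cycle lemma). -/
/-!
Read a word `d₁ … dₖ` with a counter that starts at `n` and moves by `dᵢ - 1` at each letter.
The word is the preorder degree sequence of a forest of `n` plane trees exactly when the counter
stays positive before the last letter and ends at `0`: reading a letter `d` replaces the current
tree by its `d` subtrees. Conversely, the first tree of a forest is parsed off by grouping the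
first `d` trees of the forest that the remaining word encodes.

For the cycle lemma, let `w` be the walk of partial sums of `dᵢ - 1` along `l ++ l`. Since
`∑ dᵢ = s - 1`, it drops by exactly `1` over a period, and the rotation by `t` is a tree sequence
iff `w` stays `≥ w t` during the following period. The first minimum of `w` on `[0, s)` has this
property, and two such starting points `t < t'` are impossible: `w t ≤ w t' ≤ w (t + s) = w t - 1`.
-/

/-- Rooted ordered (plane) trees. -/
inductive PTree : Type
  | node : List PTree → PTree

/-- The preorder (depth-first search) degree sequence of a plane tree. -/
def PTree.degSeq : PTree → List ℕ
  | .node ts => ts.length :: (ts.attach.map (fun t => t.1.degSeq)).flatten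
decreasing_by
  have := List.sizeOf_lt_of_mem t.2
  simp [PTree.node.sizeOf_spec] at *
  omega

theorem PTree.degSeq_node (ts : List PTree) :
    (PTree.node ts).degSeq = ts.length :: (ts.map PTree.degSeq).flatten := by
  rw [PTree.degSeq, List.attach_map_val]

def IsForestWord (n : ℕ) (l : List ℕ) : Prop :=
  l.sum + n = l.length ∧ ∀ i < l.length, i < (l.take i).sum + n

@[simp]
theorem isForestWord_nil {n : ℕ} : IsForestWord n [] ↔ n = 0 := by
  simp [IsForestWord]

theorem isForestWord_cons {n d : ℕ} {l : List ℕ} :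
    IsForestWord n (d :: l) ↔ 0 < n ∧ IsForestWord (n - 1 + d) l := by
  simp only [IsForestWord, List.length_cons, Nat.forall_lt_succ_left, List.take_zero,
    List.take_succ_cons, List.sum_cons, List.sum_nil]
  constructor
  · rintro ⟨hsum, hpos, hlt⟩
    exact ⟨by omega, by omega, fun i hi => by have := hlt i hi; omega⟩
  · rintro ⟨hpos, hsum, hlt⟩
    exact ⟨by omega, by omega, fun i hi => by have := hlt i hi; omega⟩

theorem IsForestWord.append {m n : ℕ} {a b : List ℕ} (ha : IsForestWord m a)
    (hb : IsForestWord n b) : IsForestWord (m + n) (a ++ b) := by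
  induction a generalizing m with
  | nil => rw [isForestWord_nil] at ha; simpa [ha] using hb
  | cons d a ih =>
    obtain ⟨hm, ha⟩ := isForestWord_cons.mp ha
    rw [List.cons_append, isForestWord_cons]
    refine ⟨by omega, ?_⟩
    convert ih ha using 1
    omega

theorem isForestWord_flatten_degSeq : ∀ ts : List PTree,
    IsForestWord ts.length (ts.map PTree.degSeq).flatten
  | [] => by simp
  | .node cs :: ts => by
    rw [List.map_cons, List.flatten_cons, PTree.degSeq_node, List.cons_append,
      isForestWord_cons, List.length_cons]
    refine ⟨by omega, ?_⟩
    convert (isForestWord_flatten_degSeq cs).append (isForestWord_flatten_degSeq ts) using 1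
    omega

theorem exists_forest_of_isForestWord {n : ℕ} {l : List ℕ} (h : IsForestWord n l) :
    ∃ ts : List PTree, ts.length = n ∧ (ts.map PTree.degSeq).flatten = l := by
  induction l generalizing n with
  | nil => exact ⟨[], by simpa [eq_comm] using h, rfl⟩
  | cons d l ih =>
    obtain ⟨hn, hl⟩ := isForestWord_cons.mp h
    obtain ⟨ts, hlen, rfl⟩ := ih hl
    refine ⟨.node (ts.take d) :: ts.drop d, by simp; omega, ?_⟩
    rw [List.map_cons, List.flatten_cons, PTree.degSeq_node, List.length_take,
      min_eq_left (by omega), List.cons_append, ← List.flatten_append, ← List.map_append,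
      List.take_append_drop]

theorem PTree.exists_degSeq_eq_iff {l : List ℕ} :
    (∃ t : PTree, t.degSeq = l) ↔ IsForestWord 1 l := by
  constructor
  · rintro ⟨t, rfl⟩
    simpa using isForestWord_flatten_degSeq [t]
  · intro h
    obtain ⟨ts, hlen, rfl⟩ := exists_forest_of_isForestWord h
    obtain ⟨t, rfl⟩ := List.length_eq_one_iff.mp hlen
    exact ⟨t, by simp⟩

theorem existsUnique_forall_le_add {s : ℕ} (hs : 0 < s) {f : ℕ → ℤ}
    (hf : ∀ i < s, f (i + s) + 1 = f i) : ∃! t : Fin s, ∀ j < s, f t ≤ f (t + j) := by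
  classical
  have le_of_forall_le_add : ∀ t t' : ℕ, t < s → t' < s →
      (∀ j < s, f t ≤ f (t + j)) → (∀ j < s, f t' ≤ f (t' + j)) → t ≤ t' := by
    intro t t' ht ht' hmin hmin'
    by_contra! hlt
    have h₁ := hmin' (t - t') (by omega)
    have h₂ := hmin (t' + s - t) (by omega)
    rw [show t' + (t - t') = t by omega] at h₁
    rw [show t + (t' + s - t) = t' + s by omega] at h₂
    linarith [hf t' ht']
  have hmin : ∃ t, t < s ∧ ∀ i < s, f t ≤ f i := by
    obtain ⟨t, ht, hle⟩ := (Finset.range s).exists_min_image f ⟨0, by simpa⟩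
    exact ⟨t, by simpa using ht, fun i hi => hle i (by simpa using hi)⟩
  obtain ⟨ht₀, hle⟩ := Nat.find_spec hmin
  have hmin₀ : ∀ j < s, f (Nat.find hmin) ≤ f (Nat.find hmin + j) := by
    intro j hj
    rcases lt_or_ge (Nat.find hmin + j) s with h | h
    · exact hle _ h
    obtain ⟨i, hi⟩ : ∃ i, Nat.find hmin + j = i + s := ⟨Nat.find hmin + j - s, by omega⟩
    -- `i` precedes the first minimiser, so `f i` exceeds the minimum by at least one
    have hlt : f (Nat.find hmin) < f i := by
      by_contra! hi'
      exact Nat.find_min hmin (m := i) (by omega)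
        ⟨by omega, fun k hk => hi'.trans (hle k hk)⟩
    rw [hi]
    linarith [hf i (by omega)]
  refine ⟨⟨Nat.find hmin, ht₀⟩, hmin₀, fun t ht => Fin.ext ?_⟩
  exact le_antisymm (le_of_forall_le_add _ _ t.2 ht₀ ht hmin₀)
    (le_of_forall_le_add _ _ ht₀ t.2 hmin₀ ht)

theorem List.take_rotate_eq_take_drop_append_self {α : Type*} {l : List α} {t j : ℕ}
    (ht : t ≤ l.length) (hj : j ≤ l.length) : (l.rotate t).take j = ((l ++ l).drop t).take j := by
  rw [List.rotate_eq_drop_append_take ht, List.drop_append_of_le_length ht, List.take_append,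
    List.take_append, List.take_take, min_eq_left (by simp; omega)]

def cyclicWalk (l : List ℕ) (k : ℕ) : ℤ := ((l ++ l).take k).sum - k

theorem cyclicWalk_add {l : List ℕ} {t j : ℕ} (ht : t ≤ l.length) (hj : j ≤ l.length) :
    cyclicWalk l (t + j) = cyclicWalk l t + ((l.rotate t).take j).sum - j := by
  simp only [cyclicWalk, List.take_rotate_eq_take_drop_append_self ht hj, List.take_add,
    List.sum_append]
  push_cast
  ring

theorem cyclicWalk_add_length {l : List ℕ} {i : ℕ} (hi : i ≤ l.length) :
    cyclicWalk l (i + l.length) = cyclicWalk l i + l.sum - l.length := by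
  rw [cyclicWalk_add hi le_rfl, ← List.length_rotate (n := i), List.take_length,
    (List.rotate_perm l i).sum_eq, List.length_rotate]

theorem isForestWord_one_rotate_iff {l : List ℕ} (hsum : l.sum + 1 = l.length) {t : ℕ}
    (ht : t ≤ l.length) :
    IsForestWord 1 (l.rotate t) ↔ ∀ j < l.length, cyclicWalk l t ≤ cyclicWalk l (t + j) := by
  simp only [IsForestWord, List.length_rotate, (List.rotate_perm l t).sum_eq, hsum, true_and,
    Nat.lt_add_one_iff]
  refine forall₂_congr fun j hj => ?_
  rw [cyclicWalk_add ht hj.le]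
  omega

theorem cycle_lemma_general (s : ℕ) (l : List ℕ) (hl : l.length = s)
    (hsum : l.sum + 1 = s) :
    ∃! t : Fin s, ∃ tr : PTree, tr.degSeq = l.rotate t := by
  subst hl
  have hdrift (i : ℕ) (hi : i < l.length) : cyclicWalk l (i + l.length) + 1 = cyclicWalk l i := by
    rw [cyclicWalk_add_length hi.le]
    omega
  simp_rw [PTree.exists_degSeq_eq_iff]
  exact (existsUnique_congr fun t => isForestWord_one_rotate_iff hsum t.2.le).mpr
    (existsUnique_forall_le_add (by omega) hdrift)

theorem cycle_lemma (s : ℕ) (hs : 1 ≤ s) (l : List ℕ) (hl : l.length = s)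
    (hsum : l.sum + 1 = s) :
    ∃! t : Fin s, ∃ tr : PTree, tr.degSeq = l.rotate t :=
  cycle_lemma_general s l hl hsum
end

section
/- The burning number of the path P_n on n vertices equals ⌈√n⌉. -/
open SimpleGraph
open scoped Classical

/-!
A burning sequence of length `k` covers the vertices by balls of radii `0, …, k - 1`. In the
path a ball of radius `r` has at most `2r + 1` vertices, so `n ≤ 1 + 3 + ⋯ + (2k - 1) = k²`.
Conversely, if `n ≤ k²` the balls of radius `r` centred at `r² + r` tile the blocks
`[r², (r + 1)²)`, which together cover `{0, …, k² - 1}`.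
-/

open Finset

theorem Fin.card_filter_natDist_le {n : ℕ} (c : Fin n) (r : ℕ) :
    #{u : Fin n | Nat.dist c u ≤ r} ≤ 2 * r + 1 := by
  calc #{u : Fin n | Nat.dist c u ≤ r}
      ≤ #(Icc (c - r : ℕ) (c + r)) := by
        refine card_le_card_of_injOn Fin.val (fun u hu => ?_) Fin.val_injective.injOn
        have hdist : Nat.dist c u ≤ r := by simpa using hu
        unfold Nat.dist at hdist
        simp only [coe_Icc, Set.mem_Icc]
        omega
    _ ≤ 2 * r + 1 := by simp; omega

theorem Finset.sum_range_two_mul_add_one (k : ℕ) : ∑ i ∈ range k, (2 * i + 1) = k * k := by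
  induction k with
  | zero => simp
  | succ k ih => rw [sum_range_succ, ih]; ring

theorem Nat.ceil_sqrt_le_iff {n k : ℕ} : ⌈√(n : ℝ)⌉₊ ≤ k ↔ n ≤ k * k := by
  rw [Nat.ceil_le, Real.sqrt_le_left (Nat.cast_nonneg k), sq]
  exact_mod_cast Iff.rfl

namespace SimpleGraph

variable {V : Type*} {G : SimpleGraph V}

def IsBurningSequence (G : SimpleGraph V) {k : ℕ} (v : Fin k → V) : Prop :=
  ∀ u : V, ∃ r : Fin k, G.dist (v r) u ≤ r

theorem Walk.natDist_le_length {f : V → ℕ} (hf : ∀ a b, G.Adj a b → Nat.dist (f a) (f b) ≤ 1)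
    {u v : V} (w : G.Walk u v) : Nat.dist (f u) (f v) ≤ w.length := by
  induction w with
  | nil => simp
  | cons hadj _ ih =>
    rw [Walk.length_cons]
    exact (Nat.dist.triangle_inequality _ _ _).trans (by linarith [hf _ _ hadj])

theorem Reachable.natDist_le_dist {f : V → ℕ}
    (hf : ∀ a b, G.Adj a b → Nat.dist (f a) (f b) ≤ 1) {u v : V} (h : G.Reachable u v) :
    Nat.dist (f u) (f v) ≤ G.dist u v := by
  obtain ⟨w, hw⟩ := h.exists_walk_length_eq_dist
  exact hw ▸ w.natDist_le_length hf

theorem IsBurningSequence.card_le_sum_card_ball [Fintype V] {k : ℕ} {v : Fin k → V}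
    (hv : G.IsBurningSequence v) :
    Fintype.card V ≤ ∑ r : Fin k, #{u | G.dist (v r) u ≤ r} := by
  have hcover : (univ : Finset V) ⊆ univ.biUnion fun r : Fin k => {u | G.dist (v r) u ≤ r} := by
    intro u _
    obtain ⟨r, hr⟩ := hv u
    exact mem_biUnion.2 ⟨r, mem_univ _, mem_filter.2 ⟨mem_univ _, hr⟩⟩
  exact (card_le_card hcover).trans card_biUnion_le

theorem pathGraph_dist_le_sub {n : ℕ} {i j : Fin n} (hij : i ≤ j) :
    (pathGraph n).dist i j ≤ j - i := by
  obtain ⟨j, hj⟩ := j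
  induction j with
  | zero =>
    obtain rfl : i = ⟨0, hj⟩ := Fin.ext (Nat.le_zero.1 hij)
    simp
  | succ j ih =>
    show _ ≤ j + 1 - i
    obtain rfl | hlt := eq_or_lt_of_le hij
    · simp
    replace hlt : (i : ℕ) < j + 1 := hlt
    have hadj : (pathGraph n).Adj ⟨j, by omega⟩ ⟨j + 1, hj⟩ := pathGraph_adj.2 (Or.inl rfl)
    calc (pathGraph n).dist i ⟨j + 1, hj⟩ ≤ (pathGraph n).dist i ⟨j, by omega⟩ + 1 := by
          simpa only [dist_eq_one_iff_adj.2 hadj] using hadj.reachable.dist_triangle_right i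
      _ ≤ j - i + 1 := Nat.add_le_add_right (ih _ (show (i : ℕ) ≤ j by omega)) 1
      _ = j + 1 - i := by omega

theorem pathGraph_dist {n : ℕ} (i j : Fin n) : (pathGraph n).dist i j = Nat.dist i j := by
  refine le_antisymm ?_ ((pathGraph_preconnected n i j).natDist_le_dist fun a b hab => ?_)
  · rcases le_total i j with hij | hij
    · exact (pathGraph_dist_le_sub hij).trans (by unfold Nat.dist; omega)
    · rw [dist_comm]
      exact (pathGraph_dist_le_sub hij).trans (by unfold Nat.dist; omega)
  · rcases pathGraph_adj.1 hab with h | h <;> unfold Nat.dist <;> omega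

theorem IsBurningSequence.le_mul_self_of_pathGraph {n k : ℕ} {v : Fin k → Fin n}
    (hv : (pathGraph n).IsBurningSequence v) : n ≤ k * k :=
  calc n = Fintype.card (Fin n) := (Fintype.card_fin n).symm
    _ ≤ ∑ r : Fin k, #{u | (pathGraph n).dist (v r) u ≤ r} := hv.card_le_sum_card_ball
    _ ≤ ∑ r : Fin k, (2 * (r : ℕ) + 1) := sum_le_sum fun r _ => by
        simpa only [pathGraph_dist] using Fin.card_filter_natDist_le (v r) r
    _ = k * k := by
        rw [Fin.sum_univ_eq_sum_range (fun r => 2 * r + 1) k, sum_range_two_mul_add_one]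

theorem isBurningSequence_pathGraph {n k : ℕ} (hnk : n ≤ k * k) (hkn : k ≤ n) :
    (pathGraph n).IsBurningSequence
      fun r : Fin k => (⟨min (n - 1) (r * r + r), by omega⟩ : Fin n) := by
  intro u
  have hu := u.isLt
  have hlow := Nat.sqrt_le u
  have hhigh : u < Nat.sqrt u * Nat.sqrt u + 2 * Nat.sqrt u + 1 := by
    linarith [Nat.lt_succ_sqrt u]
  have hsqrt : Nat.sqrt u < k := Nat.sqrt_lt.2 (by omega)
  refine ⟨⟨Nat.sqrt u, hsqrt⟩, ?_⟩
  rw [pathGraph_dist]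
  unfold Nat.dist
  dsimp only
  omega

end SimpleGraph

theorem burning_path_general (n : ℕ) :
    burningNumber (Fin n) (SimpleGraph.pathGraph n) = ⌈Real.sqrt n⌉₊ := by
  have hmem : ⌈Real.sqrt n⌉₊ ∈ {k | ∃ v : Fin k → Fin n, (pathGraph n).IsBurningSequence v} :=
    ⟨_, isBurningSequence_pathGraph (Nat.ceil_sqrt_le_iff.1 le_rfl)
      (Nat.ceil_sqrt_le_iff.2 (Nat.le_mul_self n))⟩
  refine le_antisymm (Nat.sInf_le hmem) (le_csInf ⟨_, hmem⟩ ?_)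
  rintro k ⟨v, hv⟩
  exact Nat.ceil_sqrt_le_iff.2 (IsBurningSequence.le_mul_self_of_pathGraph hv)

theorem burning_path (n : ℕ) (hn : 1 ≤ n) :
    burningNumber (Fin n) (SimpleGraph.pathGraph n) = ⌈Real.sqrt n⌉₊ :=
  burning_path_general n
end

section
/- For any tree T on n ≥ 2 vertices, b(T) ≤ b(C_{2(n−1)}), where C_{2(n−1)} is the cycle on 2(n−1) vertices; consequently b(T) ≤ ⌈√(2(n−1))⌉. -/
open SimpleGraph
open scoped Classical

/-!
A depth-first traversal of a connected graph on `n` vertices is a closed walk of length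
`2 (n - 1)` through every vertex; it is grown one new vertex at a time by splicing a detour
`x → y → x` into the walk. Reading the walk cyclically gives a graph homomorphism from the cycle
`C_{2(n-1)}` onto the graph, hence a distance-nonincreasing surjection, and burning sequences can
be pushed forward along such maps. Read linearly, the walk is a distance-nonincreasing image of
a path on `m = 2 (n - 1)` vertices, which `⌈√m⌉` sources burn.
-/

lemma Nat.lt_ceil_sqrt_iff {s m : ℕ} : s < ⌈√(m : ℝ)⌉₊ ↔ s ^ 2 < m := by
  rw [Nat.lt_ceil, Real.lt_sqrt (Nat.cast_nonneg s)]
  exact_mod_cast Iff.rfl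

lemma Fin.val_eq_add_one_mod_of_val_sub_eq_one {n : ℕ} {a b : Fin n} (h : (b - a).val = 1) :
    b.val = (a.val + 1) % n := by
  have : NeZero n := ⟨a.pos.ne'⟩
  calc b.val = ((b - a) + a : Fin n).val := by rw [sub_add_cancel]
    _ = (a.val + 1) % n := by rw [Fin.val_add, h, add_comm]

section Burning

variable {V W : Type*} [Fintype V] {G : SimpleGraph V}

lemma burningNumber_le {k : ℕ} (v : Fin k → V) (hv : ∀ u, ∃ r : Fin k, G.dist (v r) u ≤ r) :
    burningNumber V G ≤ k :=
  Nat.sInf_le ⟨v, hv⟩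

lemma exists_burning_sequence :
    ∃ v : Fin (burningNumber V G) → V, ∀ u, ∃ r : Fin (burningNumber V G), G.dist (v r) u ≤ r := by
  have h : ∃ v : Fin (Fintype.card V) → V, ∀ u, ∃ r : Fin _, G.dist (v r) u ≤ r :=
    ⟨(Fintype.equivFin V).symm, fun u => ⟨Fintype.equivFin V u, by simp⟩⟩
  exact Nat.sInf_mem (s := {k | ∃ v : Fin k → V, ∀ u, ∃ r : Fin k, G.dist (v r) u ≤ r}) ⟨_, h⟩

lemma burningNumber_le_of_surjective [Fintype W] {H : SimpleGraph W} (f : V → W)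
    (hf : Function.Surjective f) (hd : ∀ a b, H.dist (f a) (f b) ≤ G.dist a b) :
    burningNumber W H ≤ burningNumber V G := by
  obtain ⟨v, hv⟩ := exists_burning_sequence (G := G)
  refine burningNumber_le (f ∘ v) fun u => ?_
  obtain ⟨a, rfl⟩ := hf u
  obtain ⟨r, hr⟩ := hv a
  exact ⟨r, (hd _ _).trans hr⟩

end Burning

namespace SimpleGraph

variable {V W : Type*} {G : SimpleGraph V}

lemma Hom.dist_map_le {H : SimpleGraph W} (f : G →g H) {a b : V} (h : G.Reachable a b) :
    H.dist (f a) (f b) ≤ G.dist a b := by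
  obtain ⟨p, hp⟩ := h.exists_walk_length_eq_dist
  simpa [hp] using dist_le (p.map f)

namespace Walk

lemma dist_getVert_le {u v : V} (w : G.Walk u v) {i j : ℕ} (hij : i ≤ j) :
    G.dist (w.getVert i) (w.getVert j) ≤ j - i := by
  have h := dist_le ((w.drop i).take (j - i))
  rw [take_length, drop_getVert, Nat.add_sub_cancel' hij] at h
  exact h.trans inf_le_left

lemma adj_getVert_succ_mod {r : V} (w : G.Walk r r) {i : ℕ} (hi : i < w.length) :
    G.Adj (w.getVert i) (w.getVert ((i + 1) % w.length)) := by
  have h := w.adj_getVert_succ hi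
  rcases (show i + 1 ≤ w.length from hi).lt_or_eq with hlt | heq
  · rwa [Nat.mod_eq_of_lt hlt]
  · rw [heq, Nat.mod_self, getVert_zero]
    rwa [heq, getVert_length] at h

lemma exists_lt_length_getVert_eq {r x : V} (w : G.Walk r r) (hw : 0 < w.length)
    (hx : x ∈ w.support) : ∃ i < w.length, w.getVert i = x := by
  obtain ⟨i, rfl, hi⟩ := mem_support_iff_exists_getVert.1 hx
  rcases hi.lt_or_eq with hi | rfl
  · exact ⟨i, hi, rfl⟩
  · exact ⟨0, hw, by simp⟩

lemma exists_length_add_two_support_insert {u v x y : V} (w : G.Walk u v) (hx : x ∈ w.support)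
    (hxy : G.Adj x y) : ∃ w' : G.Walk u v,
      w'.length = w.length + 2 ∧ w'.support.toFinset = insert y w.support.toFinset := by
  refine ⟨(w.takeUntil x hx).append (cons hxy (cons hxy.symm (w.dropUntil x hx))), ?_, ?_⟩
  · conv_rhs => rw [← w.take_spec hx]
    simp only [length_append, length_cons]
    omega
  · ext z
    simp [support_append, ← mem_support_append_iff, take_spec]

def cycleGraphHom {r : V} (w : G.Walk r r) : cycleGraph w.length →g G where
  toFun i := w.getVert i
  map_rel' {a b} hab := by
    rcases cycleGraph_adj'.1 hab with h | h
    · rw [Fin.val_eq_add_one_mod_of_val_sub_eq_one h]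
      exact (w.adj_getVert_succ_mod b.isLt).symm
    · rw [Fin.val_eq_add_one_mod_of_val_sub_eq_one h]
      exact w.adj_getVert_succ_mod a.isLt

lemma burningNumber_le_burningNumber_cycleGraph [Fintype V] {r : V} (w : G.Walk r r)
    (hw : 0 < w.length) (hcover : ∀ x, x ∈ w.support) :
    burningNumber V G ≤ burningNumber (Fin w.length) (cycleGraph w.length) := by
  refine burningNumber_le_of_surjective w.cycleGraphHom (fun x => ?_)
    (fun a b => w.cycleGraphHom.dist_map_le (cycleGraph_preconnected a b))
  obtain ⟨i, hi, rfl⟩ := w.exists_lt_length_getVert_eq hw (hcover x)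
  exact ⟨⟨i, hi⟩, rfl⟩

/-- The `s`-th source sits at position `s² + s`, whose ball of radius `s` covers the positions
`s², …, s² + 2s`; every `i < m` lies in such a block with `s = ⌊√i⌋ < ⌈√m⌉`. -/
lemma burningNumber_le_ceil_sqrt [Fintype V] {u v : V} (w : G.Walk u v) {m : ℕ}
    (hcover : ∀ x, ∃ i < m, w.getVert i = x) : burningNumber V G ≤ ⌈√(m : ℝ)⌉₊ := by
  refine burningNumber_le (fun s => w.getVert (min (s ^ 2 + s) (m - 1))) fun x => ?_
  obtain ⟨i, him, rfl⟩ := hcover x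
  obtain ⟨s, hs, hs'⟩ : ∃ s, s ^ 2 ≤ i ∧ i < s ^ 2 + 2 * s + 1 :=
    ⟨Nat.sqrt i, Nat.sqrt_le' i, by linarith [Nat.lt_succ_sqrt' i]⟩
  refine ⟨⟨s, Nat.lt_ceil_sqrt_iff.2 (hs.trans_lt him)⟩, show _ ≤ s from ?_⟩
  rcases le_total (min (s ^ 2 + s) (m - 1)) i with h | h
  · exact (w.dist_getVert_le h).trans (by omega)
  · rw [dist_comm]
    exact (w.dist_getVert_le h).trans (by omega)

end Walk

lemma Connected.exists_walk_length_support_card [Fintype V] (hG : G.Connected) :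
    ∀ k < Fintype.card V, ∃ (r : V) (w : G.Walk r r),
      w.length = 2 * k ∧ w.support.toFinset.card = k + 1
  | 0, _ => ⟨hG.nonempty.some, .nil, rfl, by simp⟩
  | k + 1, hk => by
    obtain ⟨r, w, hlen, hcard⟩ := hG.exists_walk_length_support_card k (by omega)
    obtain ⟨y, -, hy⟩ := Finset.exists_mem_notMem_of_card_lt_card
      (s := w.support.toFinset) (t := Finset.univ) (by rw [Finset.card_univ]; omega)
    obtain ⟨d, -, hd, hd'⟩ := (hG.preconnected r y).some.exists_boundary_dart
      (w.support.toFinset : Set V) (by simp) hy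
    obtain ⟨w', hlen', hsupp'⟩ :=
      w.exists_length_add_two_support_insert (by simpa using hd) d.adj
    refine ⟨r, w', by omega, ?_⟩
    rw [hsupp', Finset.card_insert_of_notMem hd', hcard]

lemma Connected.exists_closed_walk_spanning [Fintype V] (hG : G.Connected) :
    ∃ (r : V) (w : G.Walk r r), w.length = 2 * (Fintype.card V - 1) ∧ ∀ x, x ∈ w.support := by
  have := hG.nonempty
  obtain ⟨r, w, hlen, hcard⟩ :=
    hG.exists_walk_length_support_card (Fintype.card V - 1) (by simp [Fintype.card_pos])
  have hsupp : w.support.toFinset = Finset.univ :=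
    Finset.eq_univ_of_card _ (by have := Fintype.card_pos (α := V); omega)
  exact ⟨r, w, hlen, fun x => List.mem_toFinset.1 (hsupp ▸ Finset.mem_univ x)⟩

end SimpleGraph

theorem burning_tree_le_cycle {V : Type*} [Fintype V] (G : SimpleGraph V) (hG : G.IsTree)
    (n : ℕ) (hn : Fintype.card V = n) (h2 : 2 ≤ n) :
    burningNumber V G ≤
        burningNumber (Fin (2 * (n - 1))) (SimpleGraph.cycleGraph (2 * (n - 1))) ∧
      burningNumber V G ≤ ⌈Real.sqrt (2 * (n - 1) : ℕ)⌉₊ := by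
  obtain ⟨r, w, hlen, hcover⟩ := hG.connected.exists_closed_walk_spanning
  rw [hn] at hlen
  have hw : 0 < w.length := by omega
  rw [← hlen]
  exact ⟨w.burningNumber_le_burningNumber_cycleGraph hw hcover,
    w.burningNumber_le_ceil_sqrt fun x => w.exists_lt_length_getVert_eq hw (hcover x)⟩
end

section
/- For any finite connected graph G on n vertices and any isometric path P of G with m vertices, the burning number satisfies b(G) ≥ b̂(G) and b̂(G)(2·b̂(G)+1) ≥ m; in particular b(G) ≥ (√(8m+1) − 1)/4. -/
open SimpleGraph
open scoped Classical

lemma dist_getVert_le {V : Type*} (G : SimpleGraph V) {u v : V} (hG : G.Connected)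
    (p : G.Walk u v) (i : ℕ) : G.dist u (p.getVert i) ≤ i := by
  induction p generalizing i with
  | nil => simp [Walk.getVert_of_length_le, SimpleGraph.dist_self]
  | cons h q ih =>
    cases i with
    | zero => simp
    | succ n =>
      rw [Walk.getVert_cons_succ]
      calc G.dist _ _ ≤ G.dist _ _ + G.dist _ _ := hG.dist_triangle
        _ ≤ 1 + n := add_le_add (by simpa using SimpleGraph.dist_le h.toWalk) (ih n)
        _ = n + 1 := by omega

lemma dist_getVert_right_le {V : Type*} (G : SimpleGraph V) {u v : V} (hG : G.Connected)
    (p : G.Walk u v) (i : ℕ) : G.dist (p.getVert i) v ≤ p.length - i := by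
  induction p generalizing i with
  | nil => simp [Walk.getVert_of_length_le, SimpleGraph.dist_self]
  | cons h q ih =>
    cases i with
    | zero =>
      simp only [Walk.getVert_zero]
      calc G.dist _ _ ≤ G.dist _ _ + G.dist _ _ := hG.dist_triangle
        _ ≤ 1 + q.length := add_le_add (by simpa using SimpleGraph.dist_le h.toWalk)
            (SimpleGraph.dist_le q)
        _ ≤ _ := by simp [Walk.length_cons]; omega
    | succ n =>
      rw [Walk.getVert_cons_succ]
      simpa [Walk.length_cons] using ih n

lemma dist_getVert_lower {V : Type*} (G : SimpleGraph V) {u v : V} (hG : G.Connected)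
    (p : G.Walk u v) (hiso : p.length = G.dist u v) {i j : ℕ} (hij : i ≤ j)
    (hj : j ≤ p.length) : j - i ≤ G.dist (p.getVert i) (p.getVert j) := by
  have h1 : G.dist u (p.getVert i) ≤ i := dist_getVert_le G hG p i
  have h2 : G.dist (p.getVert j) v ≤ p.length - j := dist_getVert_right_le G hG p j
  have h3 : G.dist u v ≤ G.dist u (p.getVert i) + G.dist (p.getVert i) v := hG.dist_triangle
  have h4 : G.dist (p.getVert i) v ≤
      G.dist (p.getVert i) (p.getVert j) + G.dist (p.getVert j) v := hG.dist_triangle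
  omega

theorem burning_isometric_path_bound {V : Type*} [Fintype V] (G : SimpleGraph V)
    (hG : G.Connected) (u v : V) (p : G.Walk u v) (hp : p.IsPath)
    (hiso : p.length = G.dist u v) (m : ℕ) (hm : p.support.length = m) :
    coverNumber V G ≤ burningNumber V G ∧
      m ≤ coverNumber V G * (2 * coverNumber V G + 1) ∧
      (Real.sqrt (8 * m + 1) - 1) / 4 ≤ (burningNumber V G : ℝ) := by
  have hne : Nonempty V := hG.nonempty
  -- burning set is nonempty
  have hburn : ∃ k, k ∈ {k | ∃ v : Fin k → V, ∀ u : V, ∃ r : Fin k, G.dist (v r) u ≤ (r : ℕ)} := by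
    refine ⟨Fintype.card V, (Fintype.equivFin V).symm, fun u => ?_⟩
    exact ⟨Fintype.equivFin V u, by simp [SimpleGraph.dist_self]⟩
  have hb := Nat.sInf_mem hburn
  obtain ⟨bv, hbv⟩ := hb
  -- the burning witness gives a cover witness with radius b
  have hcoverb : burningNumber V G ∈
      {k | ∃ v : Fin k → V, ∀ u : V, ∃ i : Fin k, G.dist (v i) u ≤ k} := by
    refine ⟨bv, fun u => ?_⟩
    obtain ⟨r, hr⟩ := hbv u
    exact ⟨r, hr.trans (le_of_lt r.isLt)⟩
  have hcb : coverNumber V G ≤ burningNumber V G := Nat.sInf_le hcoverb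
  set c := coverNumber V G with hcdef
  obtain ⟨w, hw⟩ : ∃ w : Fin c → V,
      ∀ u : V, ∃ i : Fin c, G.dist (w i) u ≤ c :=
    Nat.sInf_mem ⟨burningNumber V G, hcoverb⟩
  -- m = p.length + 1
  have hm' : m = p.length + 1 := by rw [← hm, Walk.length_support]
  -- counting argument
  have hcount : m ≤ c * (2 * c + 1) := by
    rcases Nat.eq_zero_or_pos c with hc0 | hcpos
    · exfalso
      obtain ⟨i, _⟩ := hw (Classical.arbitrary V)
      rw [hc0] at i
      exact i.elim0
    have hfin : Nonempty (Fin c) := ⟨⟨0, hcpos⟩⟩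
    set f : ℕ → Fin c := fun i => Classical.choose (hw (p.getVert i)) with hf
    have hfspec : ∀ i : ℕ, G.dist (w (f i)) (p.getVert i) ≤ c :=
      fun i => Classical.choose_spec (hw (p.getVert i))
    set S := Finset.range m with hS
    have hcard : S.card = ∑ t : Fin c, (S.filter fun i => f i = t).card :=
      Finset.card_eq_sum_card_fiberwise (fun i _ => Finset.mem_univ (f i))
    have hfiber : ∀ t : Fin c, (S.filter fun i => f i = t).card ≤ 2 * c + 1 := by
      intro t
      set T := S.filter fun i => f i = t with hT
      rcases T.eq_empty_or_nonempty with hTe | hTne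
      · simp [hTe]
      have hsub : T ⊆ Finset.Icc (T.min' hTne) (T.min' hTne + 2 * c) := by
        intro i hi
        have ha : T.min' hTne ∈ T := T.min'_mem hTne
        have hai : T.min' hTne ≤ i := T.min'_le i hi
        have hiS : i ∈ S := Finset.mem_of_mem_filter i hi
        have hil : i ≤ p.length := by
          have := Finset.mem_range.mp hiS; omega
        have hft : f i = t := (Finset.mem_filter.mp hi).2
        have hfat : f (T.min' hTne) = t := (Finset.mem_filter.mp ha).2
        have hd1 : G.dist (w t) (p.getVert (T.min' hTne)) ≤ c := by
          rw [← hfat]; exact hfspec _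
        have hd2 : G.dist (w t) (p.getVert i) ≤ c := by
          rw [← hft]; exact hfspec _
        have hlow : i - T.min' hTne ≤ G.dist (p.getVert (T.min' hTne)) (p.getVert i) :=
          dist_getVert_lower G hG p hiso hai hil
        have htri : G.dist (p.getVert (T.min' hTne)) (p.getVert i) ≤
            G.dist (p.getVert (T.min' hTne)) (w t) + G.dist (w t) (p.getVert i) :=
          hG.dist_triangle
        rw [SimpleGraph.dist_comm] at hd1
        exact Finset.mem_Icc.mpr ⟨hai, by omega⟩
      calc T.card ≤ (Finset.Icc (T.min' hTne) (T.min' hTne + 2 * c)).card :=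
            Finset.card_le_card hsub
        _ = 2 * c + 1 := by rw [Nat.card_Icc]; omega
    calc m = S.card := by simp [hS]
      _ = ∑ t : Fin c, (S.filter fun i => f i = t).card := hcard
      _ ≤ ∑ _t : Fin c, (2 * c + 1) := Finset.sum_le_sum fun t _ => hfiber t
      _ = c * (2 * c + 1) := by simp [mul_comm]
  refine ⟨hcb, hcount, ?_⟩
  -- real arithmetic
  set b := burningNumber V G with hbdef
  have hmb : m ≤ b * (2 * b + 1) :=
    hcount.trans (Nat.mul_le_mul hcb (by omega))
  have hmbr : (m : ℝ) ≤ (b : ℝ) * (2 * (b : ℝ) + 1) := by exact_mod_cast hmb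
  have hbnn : (0 : ℝ) ≤ (b : ℝ) := Nat.cast_nonneg b
  have hsq : Real.sqrt (8 * m + 1) ≤ 4 * (b : ℝ) + 1 := by
    calc Real.sqrt (8 * m + 1) ≤ Real.sqrt ((4 * (b : ℝ) + 1) ^ 2) :=
          Real.sqrt_le_sqrt (by nlinarith)
      _ = 4 * (b : ℝ) + 1 := Real.sqrt_sq (by positivity)
  linarith
end
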